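/- arXiv:2105.05223 — 2 statements merged into one kernel-verified Lean document; each statement's English description precedes it below -/
import Mathlib

section
/- Let G be a group and F a family of subgroups of G. The map g ↦ g·(coset of the trivial subgroup) is a G-equivariant embedding of the regular G-set G into G/F, and precomposition with it gives a cochain map from bounded G-equivariant W^#-valued cochains on (G/F)^{•+1} to the ordinary bounded cochain complex of G (bounded G-equivariant cochains on G^{•+1}). Suppose that for every normed ℝG-module W this map induces a bijection H¹_{F,b}(G;W^#) → H¹_b(G;W^#). Then every subgroup H ∈ F is amenable, i.e. admits a left-invariant mean on ℓ∞(H). -/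
/-!
Take `W = ℓ∞(G)/ℝ` with the translation action. The Johnson cocycle
`J(x₀, x₁) = ([u] ↦ u x₁ - u x₀)` is a bounded equivariant `W^#`-valued 1-cocycle on `G`, so by
surjectivity `J + δb` is the restriction of an equivariant cocycle `c` on `G/F`. For `H ∈ F`
the coset `H ∈ G/H` is a point `x₀` fixed by `H`, hence `φ = c(x₀, 1) - b(1)` satisfies
`φ ∘ h⁻¹ = φ + J(1, h)` for `h ∈ H`, and `m u = u 1 - φ [u]` is a bounded `H`-invariant functional
on `ℓ∞(G)` with `m 1 = 1`. Its positive part `m⁺ f = sup {m v | 0 ≤ v ≤ f}` is still invariant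
and `m⁺ 1 ≥ 1`; normalised, it is an `H`-invariant mean on `ℓ∞(G)`, which pulls back to `ℓ∞(H)`
along an `H`-equivariant retraction `G → H`.
-/

open scoped BigOperators

universe u v w

namespace RelBdd

variable {G : Type u} [Group G]

/-- `F` is a family of subgroups of `G`: nonempty, closed under conjugation and
closed under taking subgroups. -/
def IsFamily (F : Set (Subgroup G)) : Prop :=
  F.Nonempty ∧
    (∀ H ∈ F, ∀ g : G, Subgroup.map ((MulAut.conj g).toMonoidHom) H ∈ F) ∧
    ∀ H ∈ F, ∀ K : Subgroup G, K ≤ H → K ∈ F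

/-- The `G`-set `G/F = ⨿_{H ∈ F} G/H`. -/
abbrev Cos (G : Type u) [Group G] (F : Set (Subgroup G)) : Type u :=
  Σ H : F, G ⧸ (H : Subgroup G)

instance (F : Set (Subgroup G)) : SMul G (Cos G F) :=
  ⟨fun g x => ⟨x.1, g • x.2⟩⟩

instance (F : Set (Subgroup G)) : MulAction G (Cos G F) where
  one_smul := by
    rintro ⟨H, q⟩
    show (⟨H, (1 : G) • q⟩ : Cos G F) = ⟨H, q⟩
    rw [one_smul]
  mul_smul g h := by
    rintro ⟨H, q⟩
    show (⟨H, (g * h) • q⟩ : Cos G F) = ⟨H, g • h • q⟩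
    rw [mul_smul]

/-- A function into a normed space is bounded. -/
def Bdd {α : Type*} {V : Type*} [Norm V] (f : α → V) : Prop :=
  ∃ C : ℝ, ∀ x, ‖f x‖ ≤ C

/-- The simplicial coboundary operator on `V`-valued cochains on a set `S`. -/
def delta {S : Type*} {V : Type*} [AddCommGroup V] [Module ℝ V] (n : ℕ)
    (f : (Fin (n + 1) → S) → V) : (Fin (n + 2) → S) → V :=
  fun x => ∑ i : Fin (n + 2), ((-1 : ℝ) ^ (i : ℕ)) • f (fun j => x (i.succAbove j))

/-- `ℓ∞(S)`: the space of bounded real valued functions on `S`. -/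
def Linf (S : Type v) : Submodule ℝ (S → ℝ) where
  carrier := {f | ∃ C : ℝ, ∀ s, |f s| ≤ C}
  add_mem' := by
    rintro f g ⟨C, hC⟩ ⟨D, hD⟩
    exact ⟨C + D, fun s => (abs_add_le _ _).trans (add_le_add (hC s) (hD s))⟩
  zero_mem' := ⟨0, fun s => by simp⟩
  smul_mem' := by
    rintro r f ⟨C, hC⟩
    refine ⟨|r| * C, fun s => ?_⟩
    show |r * f s| ≤ |r| * C
    rw [abs_mul]
    exact mul_le_mul_of_nonneg_left (hC s) (abs_nonneg r)

/-- The constant function `r` as an element of `ℓ∞(S)`. -/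
def constLinf (S : Type v) (r : ℝ) : Linf S :=
  ⟨fun _ => r, ⟨|r|, fun _ => le_rfl⟩⟩

/-- Precomposition with a map `φ : S → S` as a linear endomorphism of `ℓ∞(S)`. -/
def compL {S : Type v} (φ : S → S) : Linf S →ₗ[ℝ] Linf S where
  toFun f := ⟨fun s => (f : S → ℝ) (φ s), by
    obtain ⟨C, hC⟩ := f.2
    exact ⟨C, fun s => hC (φ s)⟩⟩
  map_add' f g := by ext s; rfl
  map_smul' r f := by ext s; rfl

/-- There exists a `K`-invariant mean on the `K`-set `S`. -/
def InvariantMean (K : Type u) (S : Type v) [Group K] [MulAction K S] : Prop :=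
  ∃ m : Linf S →ₗ[ℝ] ℝ,
    m (constLinf S 1) = 1 ∧
    (∀ f : Linf S, (∀ s, 0 ≤ (f : S → ℝ) s) → 0 ≤ m f) ∧
    ∀ (g : K) (f : Linf S), m (compL (fun s => g⁻¹ • s) f) = m f

/-- The restriction `F|_H = {L ∩ H : L ∈ F}` of a collection of subgroups of `G` to
a collection of subgroups of `H`. -/
def restrictedFamily (F : Set (Subgroup G)) (H : Subgroup G) : Set (Subgroup H) :=
  {K | ∃ L ∈ F, K = L.subgroupOf H}

/-- `K` is amenable relative to the collection `𝒦` of its subgroups: the `K`-set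
`⨿_{L ∈ 𝒦} K/L` admits a `K`-invariant mean. -/
def RelativelyAmenable (K : Type u) [Group K] (𝒦 : Set (Subgroup K)) : Prop :=
  InvariantMean K (Cos K 𝒦)

/-- The family generated by a set `ℋ` of subgroups: all subgroups of conjugates of
members of `ℋ`, together with the trivial subgroup. -/
def famGen (ℋ : Set (Subgroup G)) : Set (Subgroup G) :=
  {K | K = ⊥ ∨ ∃ H ∈ ℋ, ∃ g : G, ∀ x ∈ K, g⁻¹ * x * g ∈ H}

/-- The left multiplication action of `g ∈ G` on a normed `ℝG`-module `W`, as a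
continuous linear map. -/
def smulCLM {W : Type w} [NormedAddCommGroup W] [NormedSpace ℝ W] [DistribMulAction G W]
    [SMulCommClass G ℝ W] (hW : ∀ (g : G) (w : W), ‖g • w‖ = ‖w‖) (g : G) : W →L[ℝ] W :=
  LinearMap.mkContinuous
    { toFun := fun w => g • w
      map_add' := fun a b => smul_add g a b
      map_smul' := fun r w => smul_comm g r w }
    1 (fun w => by simp [hW])

/-- The `G`-equivariant embedding of the regular `G`-set `G` into `G/F`,
`g ↦ g • (coset of the trivial subgroup)`. -/
def trivEmb {G : Type u} [Group G] {F : Set (Subgroup G)}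
    (hbot : (⊥ : Subgroup G) ∈ F) : G → Cos G F :=
  fun g => ⟨⟨⊥, hbot⟩, QuotientGroup.mk g⟩

section Cochains

variable {S V : Type*} [AddCommGroup V] [Module ℝ V]

theorem delta_zero_apply (b : (Fin 1 → S) → V) (y : Fin 2 → S) :
    delta 0 b y = b ![y 1] - b ![y 0] := by
  have h0 : (fun j => y ((0 : Fin 2).succAbove j)) = ![y 1] := by ext j; fin_cases j; rfl
  have h1 : (fun j => y ((1 : Fin 2).succAbove j)) = ![y 0] := by ext j; fin_cases j; rfl
  rw [delta, Fin.sum_univ_two, h0, h1]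
  norm_num
  abel

theorem delta_one_apply (c : (Fin 2 → S) → V) (y : Fin 3 → S) :
    delta 1 c y = c ![y 1, y 2] - c ![y 0, y 2] + c ![y 0, y 1] := by
  have h0 : (fun j => y ((0 : Fin 3).succAbove j)) = ![y 1, y 2] := by
    ext j; fin_cases j <;> rfl
  have h1 : (fun j => y ((1 : Fin 3).succAbove j)) = ![y 0, y 2] := by
    ext j; fin_cases j <;> rfl
  have h2 : (fun j => y ((2 : Fin 3).succAbove j)) = ![y 0, y 1] := by
    ext j; fin_cases j <;> rfl
  rw [delta, Fin.sum_univ_three, h0, h1, h2]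
  norm_num
  abel

end Cochains

section Lift

theorem smul_trivEmb {F : Set (Subgroup G)} (hbot : (⊥ : Subgroup G) ∈ F) (g x : G) :
    g • trivEmb hbot x = trivEmb hbot (g * x) := rfl

variable {W : Type w} [NormedAddCommGroup W] [NormedSpace ℝ W] [DistribMulAction G W]
  [SMulCommClass G ℝ W] (hW : ∀ (g : G) (w : W), ‖g • w‖ = ‖w‖)

theorem exists_comp_smul_eq_add_of_lift {F : Set (Subgroup G)} (hbot : (⊥ : Subgroup G) ∈ F)
    {H : Subgroup G} (hH : H ∈ F) {f : (Fin 2 → G) → (W →L[ℝ] ℝ)}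
    {c : (Fin 2 → Cos G F) → (W →L[ℝ] ℝ)}
    (hc : ∀ (g : G) (x : Fin 2 → Cos G F), c (fun j => g • x j) = (c x).comp (smulCLM hW g⁻¹))
    (hc_cocycle : delta 1 c = 0) {b : (Fin 1 → G) → (W →L[ℝ] ℝ)}
    (hb : ∀ (g : G) (x : Fin 1 → G), b (fun j => g • x j) = (b x).comp (smulCLM hW g⁻¹))
    (hcb : ∀ x : Fin 2 → G, c (fun j => trivEmb hbot (x j)) = f x + delta 0 b x) :
    ∃ φ : W →L[ℝ] ℝ, ∀ h ∈ H, φ.comp (smulCLM hW h⁻¹) = φ + f ![1, h] := by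
  set x₀ : Cos G F := ⟨⟨H, hH⟩, QuotientGroup.mk 1⟩
  set e : G → Cos G F := trivEmb hbot
  refine ⟨c ![x₀, e 1] - b ![1], fun h hh => ?_⟩
  have hx₀ : h • x₀ = x₀ := Sigma.ext rfl <| heq_of_eq <| QuotientGroup.eq.2 <| by simpa using hh
  have hc_h : c ![x₀, e h] = (c ![x₀, e 1]).comp (smulCLM hW h⁻¹) := by
    rw [← hc]
    congr 1
    funext j
    fin_cases j
    · exact hx₀.symm
    · simp [e, smul_trivEmb]
  have hb_h : b ![h] = (b ![1]).comp (smulCLM hW h⁻¹) := by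
    rw [← hb]
    congr 1
    funext j
    fin_cases j
    exact (mul_one h).symm
  have hcoc := congrFun hc_cocycle ![x₀, e 1, e h]
  have hcb_h := hcb ![1, h]
  simp only [delta_one_apply, delta_zero_apply, Matrix.cons_val_zero, Matrix.cons_val_one,
    Matrix.cons_val_two, Matrix.head_cons, Matrix.tail_cons, Pi.zero_apply] at hcoc hcb_h
  have he : (fun j => e (![1, h] j)) = ![e 1, e h] := by funext j; fin_cases j <;> rfl
  rw [he] at hcb_h
  rw [ContinuousLinearMap.sub_comp, ← hc_h, ← hb_h]
  linear_combination (norm := module) hcb_h - hcoc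

end Lift

section PositivePart

open Set
open scoped Pointwise

variable {E : Type*} [AddCommGroup E] [Lattice E]

theorem Icc_zero_add [IsOrderedAddMonoid E] {f g : E} (hf : 0 ≤ f) (hg : 0 ≤ g) :
    Icc 0 (f + g) = Icc 0 f + Icc 0 g := by
  refine Subset.antisymm (fun v ⟨hv0, hv⟩ => ?_) ?_
  · refine ⟨v ⊓ f, ⟨le_inf hv0 hf, inf_le_right⟩, v - v ⊓ f,
      ⟨sub_nonneg.2 inf_le_left, ?_⟩, add_sub_cancel _ _⟩
    rw [sub_le_iff_le_add, add_inf]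
    exact le_inf (le_add_of_nonneg_left hg) (hv.trans_eq (add_comm f g))
  · rintro _ ⟨v, ⟨hv0, hvf⟩, w, ⟨hw0, hwg⟩, rfl⟩
    exact ⟨add_nonneg hv0 hw0, add_le_add hvf hwg⟩

variable [Module ℝ E]

theorem Icc_zero_smul [PosSMulMono ℝ E] {t : ℝ} (ht : 0 < t) (f : E) :
    Icc 0 (t • f) = t • Icc 0 f := by
  refine Subset.antisymm (fun v ⟨hv0, hv⟩ => ⟨t⁻¹ • v, ⟨?_, ?_⟩, smul_inv_smul₀ ht.ne' v⟩) ?_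
  · exact smul_nonneg (inv_nonneg.2 ht.le) hv0
  · simpa [inv_smul_smul₀ ht.ne'] using smul_le_smul_of_nonneg_left hv (inv_nonneg.2 ht.le)
  · rintro _ ⟨v, ⟨hv0, hvf⟩, rfl⟩
    exact ⟨smul_nonneg ht.le hv0, smul_le_smul_of_nonneg_left hvf ht.le⟩

variable (m : E →ₗ[ℝ] ℝ)

/-- The Riesz–Kantorovich formula for the positive part of `m`, evaluated at `f ≥ 0`. -/
noncomputable def supIcc (f : E) : ℝ := sSup (m '' Icc 0 f)

variable {m}

theorem supIcc_zero : supIcc m (0 : E) = 0 := by simp [supIcc]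

theorem supIcc_map (T : E ≃+o E) (hmT : ∀ f, m (T f) = m f) (f : E) :
    supIcc m (T f) = supIcc m f := by
  have hIcc : Icc 0 (T f) = T '' Icc 0 f := calc
    Icc 0 (T f) = Icc (T 0) (T f) := by rw [map_zero]
    _ = T '' Icc 0 f := (T.toOrderIso.image_Icc 0 f).symm
  rw [supIcc, hIcc, image_image, supIcc]
  simp only [hmT]

theorem supIcc_smul [PosSMulMono ℝ E] (f : E) {t : ℝ} (ht : 0 ≤ t) :
    supIcc m (t • f) = t * supIcc m f := by
  rcases ht.eq_or_lt with rfl | ht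
  · simp [supIcc]
  rw [supIcc, Icc_zero_smul ht, image_smul_set, Real.sSup_smul_of_nonneg ht.le, smul_eq_mul,
    supIcc]

variable (hm : ∀ f, BddAbove (m '' Icc 0 f))
include hm

theorem le_supIcc {f v : E} (hv : v ∈ Icc 0 f) : m v ≤ supIcc m f :=
  le_csSup (hm f) (mem_image_of_mem m hv)

theorem supIcc_nonneg {f : E} (hf : 0 ≤ f) : 0 ≤ supIcc m f := by
  simpa using le_supIcc hm ⟨le_rfl, hf⟩

variable [IsOrderedAddMonoid E]

theorem supIcc_add {f g : E} (hf : 0 ≤ f) (hg : 0 ≤ g) :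
    supIcc m (f + g) = supIcc m f + supIcc m g := by
  rw [supIcc, Icc_zero_add hf hg, image_add]
  exact csSup_add ((nonempty_Icc.2 hf).image m) (hm f) ((nonempty_Icc.2 hg).image m) (hm g)

theorem supIcc_sub_supIcc {p q p' q' : E} (hp : 0 ≤ p) (hq : 0 ≤ q) (hp' : 0 ≤ p')
    (hq' : 0 ≤ q') (h : p - q = p' - q') :
    supIcc m p - supIcc m q = supIcc m p' - supIcc m q' := by
  have h' : p + q' = p' + q := by rw [← sub_eq_sub_iff_add_eq_add, h]
  have := congrArg (supIcc m) h'
  rw [supIcc_add hm hp hq', supIcc_add hm hp' hq] at this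
  linarith

theorem supIcc_posPart_sub_supIcc_negPart {f p q : E} (hp : 0 ≤ p) (hq : 0 ≤ q)
    (h : p - q = f) : supIcc m f⁺ - supIcc m f⁻ = supIcc m p - supIcc m q :=
  supIcc_sub_supIcc hm (posPart_nonneg f) (negPart_nonneg f) hp hq
    (by rw [posPart_sub_negPart, h])

variable [PosSMulMono ℝ E]

noncomputable def functionalPosPart : E →ₗ[ℝ] ℝ where
  toFun f := supIcc m f⁺ - supIcc m f⁻
  map_add' f g := by
    rw [supIcc_posPart_sub_supIcc_negPart hm (add_nonneg (posPart_nonneg f) (posPart_nonneg g))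
      (add_nonneg (negPart_nonneg f) (negPart_nonneg g)) (by rw [add_sub_add_comm,
        posPart_sub_negPart, posPart_sub_negPart]),
      supIcc_add hm (posPart_nonneg f) (posPart_nonneg g),
      supIcc_add hm (negPart_nonneg f) (negPart_nonneg g)]
    ring
  map_smul' t f := by
    rcases le_total 0 t with ht | ht
    · rw [supIcc_posPart_sub_supIcc_negPart hm (smul_nonneg ht (posPart_nonneg f))
        (smul_nonneg ht (negPart_nonneg f)) (by rw [← smul_sub, posPart_sub_negPart]),
        supIcc_smul f⁺ ht, supIcc_smul f⁻ ht]
      simp only [smul_eq_mul, RingHom.id_apply]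
      ring
    · have ht' : 0 ≤ -t := neg_nonneg.2 ht
      rw [supIcc_posPart_sub_supIcc_negPart hm (smul_nonneg ht' (negPart_nonneg f))
        (smul_nonneg ht' (posPart_nonneg f)) (by rw [← smul_sub, ← neg_sub, smul_neg, neg_smul,
          neg_neg, posPart_sub_negPart]),
        supIcc_smul f⁺ ht', supIcc_smul f⁻ ht']
      simp only [smul_eq_mul, RingHom.id_apply]
      ring

theorem functionalPosPart_of_nonneg {f : E} (hf : 0 ≤ f) :
    functionalPosPart hm f = supIcc m f := by
  change supIcc m f⁺ - supIcc m f⁻ = _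
  rw [supIcc_posPart_sub_supIcc_negPart hm hf le_rfl (sub_zero f), supIcc_zero, sub_zero]

theorem le_functionalPosPart {f : E} (hf : 0 ≤ f) : m f ≤ functionalPosPart hm f :=
  (functionalPosPart_of_nonneg hm hf).symm ▸ le_supIcc hm ⟨hf, le_rfl⟩

theorem functionalPosPart_nonneg {f : E} (hf : 0 ≤ f) : 0 ≤ functionalPosPart hm f :=
  (functionalPosPart_of_nonneg hm hf).symm ▸ supIcc_nonneg hm hf

theorem functionalPosPart_map (T : E ≃+o E) (hmT : ∀ f, m (T f) = m f) (f : E) :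
    functionalPosPart hm (T f) = functionalPosPart hm f := by
  change _ = supIcc m f⁺ - supIcc m f⁻
  rw [← supIcc_map T hmT f⁺, ← supIcc_map T hmT f⁻]
  exact supIcc_posPart_sub_supIcc_negPart hm (map_nonneg T (posPart_nonneg f))
    (map_nonneg T (negPart_nonneg f)) (by rw [← map_sub, posPart_sub_negPart])

end PositivePart

section InvariantMean

variable {S : Type v}

instance : Lattice (Linf S) :=
  Subtype.lattice
    (fun _ _ ⟨C, hC⟩ ⟨D, hD⟩ =>
      ⟨max C D, fun s => (abs_max_le_max_abs_abs).trans (max_le_max (hC s) (hD s))⟩)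
    (fun _ _ ⟨C, hC⟩ ⟨D, hD⟩ =>
      ⟨max C D, fun s => (abs_min_le_max_abs_abs).trans (max_le_max (hC s) (hD s))⟩)

instance : PosSMulMono ℝ (Linf S) :=
  ⟨fun _ ht _ _ hfg s => mul_le_mul_of_nonneg_left (hfg s) ht⟩

def Linf.compOrderAddIso (σ : Equiv.Perm S) : Linf S ≃+o Linf S where
  toFun := compL σ
  invFun := compL σ.symm
  left_inv f := Subtype.ext <| funext fun s => congrArg f.1 (σ.apply_symm_apply s)
  right_inv f := Subtype.ext <| funext fun s => congrArg f.1 (σ.symm_apply_apply s)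
  map_add' := map_add (compL σ)
  map_le_map_iff' := ⟨fun h s => by simpa [compL] using h (σ.symm s), fun h s => h (σ s)⟩

theorem invariantMean_of_functional {K : Type u} [Group K] [MulAction K S]
    (m : Linf S →ₗ[ℝ] ℝ) (hm : ∀ f, BddAbove (m '' Set.Icc 0 f))
    (h1 : m (constLinf S 1) = 1)
    (hinv : ∀ (g : K) (f : Linf S), m (compL (fun s => g⁻¹ • s) f) = m f) :
    InvariantMean K S := by
  have h1_nonneg : 0 ≤ constLinf S 1 := fun _ => zero_le_one
  have hpos : 0 < functionalPosPart hm (constLinf S 1) := by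
    linarith [le_functionalPosPart hm h1_nonneg]
  refine ⟨(functionalPosPart hm (constLinf S 1))⁻¹ • functionalPosPart hm, ?_, ?_, ?_⟩
  · simp [hpos.ne']
  · exact fun f hf => smul_nonneg (inv_nonneg.2 hpos.le) (functionalPosPart_nonneg hm hf)
  · intro g f
    simp only [LinearMap.smul_apply]
    congr 1
    exact functionalPosPart_map hm (Linf.compOrderAddIso (MulAction.toPerm g⁻¹)) (hinv g) f

end InvariantMean

section Transfer

def Linf.comap {S : Type v} {T : Type w} (r : T → S) : Linf S →ₗ[ℝ] Linf T where
  toFun f := ⟨fun t => (f : S → ℝ) (r t), let ⟨C, hC⟩ := f.2; ⟨C, fun t => hC (r t)⟩⟩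
  map_add' _ _ := rfl
  map_smul' _ _ := rfl

noncomputable def retraction (H : Subgroup G) (g : G) : H :=
  ⟨g * (Quotient.mk (QuotientGroup.rightRel H) g).out⁻¹,
    QuotientGroup.rightRel_apply.1 (Quotient.exact (Quotient.out_eq _))⟩

theorem retraction_mul (H : Subgroup G) (h : H) (g : G) :
    retraction H (h * g) = h * retraction H g := by
  have hcoset : Quotient.mk (QuotientGroup.rightRel H) (h * g)
      = Quotient.mk (QuotientGroup.rightRel H) g :=
    Quot.sound (QuotientGroup.rightRel_apply.2 (by simp))
  apply Subtype.ext
  change (h : G) * g * (Quotient.mk _ ((h : G) * g)).out⁻¹ = h * (g * (Quotient.mk _ g).out⁻¹)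
  rw [hcoset, mul_assoc]

theorem invariantMean_subgroup_of_functional (H : Subgroup G) (m : Linf G →ₗ[ℝ] ℝ)
    (hm : ∀ f, BddAbove (m '' Set.Icc 0 f)) (h1 : m (constLinf G 1) = 1)
    (hinv : ∀ h ∈ H, ∀ f, m (compL (fun s => h⁻¹ * s) f) = m f) :
    InvariantMean H H := by
  have hcomap : ∀ (h : H) (f : Linf H), Linf.comap (retraction H) (compL (fun s => h⁻¹ • s) f)
      = compL (fun s => (h : G)⁻¹ * s) (Linf.comap (retraction H) f) := fun h f =>
    Subtype.ext <| funext fun g => congrArg f.1 (retraction_mul H h⁻¹ g).symm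
  refine invariantMean_of_functional (m ∘ₗ Linf.comap (retraction H)) (fun f => ?_) h1
    (fun h f => by simp only [LinearMap.comp_apply, hcomap, hinv h h.2])
  refine (hm (Linf.comap (retraction H) f)).mono ?_
  rintro _ ⟨v, ⟨hv0, hvf⟩, rfl⟩
  exact ⟨Linf.comap (retraction H) v, ⟨fun g => hv0 _, fun g => hvf _⟩, rfl⟩

end Transfer

section LinftyModConst

theorem Submodule.Quotient.norm_liftQ_apply_le {M N : Type*} [SeminormedAddCommGroup M]
    [SeminormedAddCommGroup N] {R : Type*} [Ring R] [Module R M] [Module R N]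
    (S : Submodule R M) (f : M →ₗ[R] N) (hf : S ≤ LinearMap.ker f) {C : ℝ} (hC : 0 ≤ C)
    (hbound : ∀ x, ‖f x‖ ≤ C * ‖x‖) (w : M ⧸ S) : ‖S.liftQ f hf w‖ ≤ C * ‖w‖ :=
  (QuotientAddGroup.norm_lift_apply_le (f.toAddMonoidHom.mkNormedAddGroupHom C hbound)
    (fun _ hx => hf hx) w).trans
    (mul_le_mul_of_nonneg_right (AddMonoidHom.mkNormedAddGroupHom_norm_le _ hC _) (norm_nonneg _))

theorem norm_smul_eq_of_le {M W : Type*} [Group M] [MulAction M W] [Norm W]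
    (h : ∀ (g : M) (w : W), ‖g • w‖ ≤ ‖w‖) (g : M) (w : W) : ‖g • w‖ = ‖w‖ :=
  (h g w).antisymm (by simpa using h g⁻¹ (g • w))

variable (G) in
abbrev Linfty : Type u := lp (fun _ : G => ℝ) ⊤

noncomputable instance : SMul G (Linfty G) :=
  ⟨fun g u => ⟨fun x => u (g⁻¹ * x), memℓp_infty <|
    (memℓp_infty_iff.1 u.2).mono (Set.range_comp_subset_range (g⁻¹ * ·) fun x => ‖u x‖)⟩⟩

theorem Linfty.smul_apply (g : G) (u : Linfty G) (x : G) : (g • u) x = u (g⁻¹ * x) := rfl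

noncomputable instance : DistribMulAction G (Linfty G) where
  one_smul u := lp.ext <| funext fun x => by simp [Linfty.smul_apply]
  mul_smul g h u := lp.ext <| funext fun x => by simp [Linfty.smul_apply, mul_assoc]
  smul_zero _ := lp.ext rfl
  smul_add _ _ _ := lp.ext rfl

instance : SMulCommClass G ℝ (Linfty G) := ⟨fun _ _ _ => lp.ext rfl⟩

theorem Linfty.norm_smul (g : G) (u : Linfty G) : ‖g • u‖ = ‖u‖ :=
  norm_smul_eq_of_le (fun _ u => lp.norm_le_of_forall_le (norm_nonneg u)
    fun _ => lp.norm_apply_le_norm ENNReal.top_ne_zero u _) g u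

theorem Linfty.smul_one (g : G) : g • (1 : Linfty G) = 1 := lp.ext rfl

instance : IsClosed ((ℝ ∙ (1 : Linfty G) : Submodule ℝ (Linfty G)) : Set (Linfty G)) :=
  Submodule.closed_of_finiteDimensional _

variable (G) in
abbrev LinftyModConst : Type u := Linfty G ⧸ (ℝ ∙ (1 : Linfty G))

theorem Linfty.span_one_le_comap_smul (g : G) :
    ℝ ∙ (1 : Linfty G) ≤ (ℝ ∙ 1).comap (DistribSMul.toLinearMap ℝ (Linfty G) g) :=
  (Submodule.span_singleton_le_iff_mem _ _).2 <| by
    simp [DistribSMul.toLinearMap_apply, Linfty.smul_one]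

noncomputable instance : SMul G (LinftyModConst G) :=
  ⟨fun g => (ℝ ∙ 1).mapQ (ℝ ∙ 1) (DistribSMul.toLinearMap ℝ _ g) (Linfty.span_one_le_comap_smul g)⟩

theorem LinftyModConst.smul_mk (g : G) (u : Linfty G) :
    g • (Submodule.Quotient.mk u : LinftyModConst G) = Submodule.Quotient.mk (g • u) := rfl

noncomputable instance : DistribMulAction G (LinftyModConst G) where
  one_smul w := Submodule.Quotient.induction_on _ w fun u => by
    rw [LinftyModConst.smul_mk, one_smul]
  mul_smul g h w := Submodule.Quotient.induction_on _ w fun u => by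
    simp only [LinftyModConst.smul_mk, mul_smul]
  smul_zero g := map_zero ((ℝ ∙ 1).mapQ (ℝ ∙ 1) _ (Linfty.span_one_le_comap_smul g))
  smul_add g := map_add ((ℝ ∙ 1).mapQ (ℝ ∙ 1) _ (Linfty.span_one_le_comap_smul g))

instance : SMulCommClass G ℝ (LinftyModConst G) :=
  ⟨fun g r w => (map_smul ((ℝ ∙ 1).mapQ (ℝ ∙ 1) _ (Linfty.span_one_le_comap_smul g)) r w)⟩

theorem LinftyModConst.norm_smul (g : G) (w : LinftyModConst G) : ‖g • w‖ = ‖w‖ :=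
  norm_smul_eq_of_le (fun g w =>
    (Submodule.Quotient.norm_liftQ_apply_le _ _ _ zero_le_one (fun u =>
      (Submodule.Quotient.norm_mk_le _ (g • u)).trans_eq (by rw [Linfty.norm_smul, one_mul]))
      w).trans_eq (one_mul _)) g w

noncomputable def johnson (x : Fin 2 → G) : LinftyModConst G →L[ℝ] ℝ :=
  LinearMap.mkContinuous
    ((ℝ ∙ 1).liftQ (lp.evalₗ (𝕜 := ℝ) (fun _ : G => ℝ) ⊤ (x 1) - lp.evalₗ _ ⊤ (x 0))
      ((Submodule.span_singleton_le_iff_mem _ _).2 (by simp [lp.infty_coeFn_one])))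
    2 (Submodule.Quotient.norm_liftQ_apply_le _ _ _ zero_le_two fun u => by
      have h₀ := lp.norm_apply_le_norm ENNReal.top_ne_zero u (x 0)
      have h₁ := lp.norm_apply_le_norm ENNReal.top_ne_zero u (x 1)
      simp only [LinearMap.sub_apply, lp.evalₗ_apply]
      linarith [norm_sub_le (u (x 1)) (u (x 0))])

omit [Group G] in
theorem johnson_mk (x : Fin 2 → G) (u : Linfty G) :
    johnson x (Submodule.Quotient.mk u) = u (x 1) - u (x 0) := rfl

omit [Group G] in
theorem bdd_johnson : Bdd (johnson (G := G)) :=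
  ⟨2, fun _ => LinearMap.mkContinuous_norm_le _ zero_le_two _⟩

theorem johnson_smul (hW : ∀ (g : G) (w : LinftyModConst G), ‖g • w‖ = ‖w‖) (g : G)
    (x : Fin 2 → G) : johnson (fun j => g • x j) = (johnson x).comp (smulCLM hW g⁻¹) := by
  refine ContinuousLinearMap.ext fun w => Submodule.Quotient.induction_on _ w fun u => ?_
  simp [smulCLM, johnson_mk, LinftyModConst.smul_mk, Linfty.smul_apply]

omit [Group G] in
theorem delta_johnson : delta 1 (johnson (G := G)) = 0 := by
  funext y
  refine ContinuousLinearMap.ext fun w => Submodule.Quotient.induction_on _ w fun u => ?_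
  simp [delta_one_apply, johnson_mk]

end LinftyModConst

section JohnsonMean

def Linf.toLp {S : Type v} : Linf S →ₗ[ℝ] lp (fun _ : S => ℝ) ⊤ where
  toFun u := ⟨(u : S → ℝ), memℓp_infty <|
    let ⟨C, hC⟩ := u.2; ⟨C, by rintro _ ⟨s, rfl⟩; exact hC s⟩⟩
  map_add' _ _ := rfl
  map_smul' _ _ := rfl

theorem Linf.toLp_apply {S : Type v} (u : Linf S) (s : S) : Linf.toLp u s = (u : S → ℝ) s := rfl

theorem Linf.toLp_constLinf {S : Type v} : Linf.toLp (constLinf S 1) = 1 := lp.ext rfl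

theorem Linf.toLp_compL_mul (h : G) (u : Linf G) :
    Linf.toLp (compL (fun s => h⁻¹ * s) u) = h • Linf.toLp u := rfl

theorem bddAbove_image_Icc_toLp {S : Type v} (m : lp (fun _ : S => ℝ) ⊤ →L[ℝ] ℝ) (f : Linf S) :
    BddAbove ((m.toLinearMap ∘ₗ Linf.toLp) '' Set.Icc 0 f) := by
  refine ⟨‖m‖ * ‖Linf.toLp f‖, ?_⟩
  rintro _ ⟨v, ⟨hv0, hvf⟩, rfl⟩
  have hv : ‖Linf.toLp v‖ ≤ ‖Linf.toLp f‖ :=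
    lp.norm_le_of_forall_le (norm_nonneg _) fun s => by
      have hf := lp.norm_apply_le_norm ENNReal.top_ne_zero (Linf.toLp f) s
      rw [Linf.toLp_apply, Real.norm_eq_abs] at hf ⊢
      exact (abs_le_abs_of_nonneg (hv0 s) (hvf s)).trans hf
  exact (le_abs_self _).trans ((m.le_opNorm _).trans (mul_le_mul_of_nonneg_left hv (norm_nonneg m)))

noncomputable def johnsonMean (φ : LinftyModConst G →L[ℝ] ℝ) : Linfty G →L[ℝ] ℝ :=
  lp.evalCLM ℝ _ ⊤ 1 - φ.comp (ℝ ∙ 1).mkQL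

theorem johnsonMean_one (φ : LinftyModConst G →L[ℝ] ℝ) : johnsonMean φ 1 = 1 := by
  have h1 : (ℝ ∙ (1 : Linfty G)).mkQL 1 = 0 :=
    (Submodule.Quotient.mk_eq_zero _).2 (Submodule.mem_span_singleton_self _)
  simp [johnsonMean, h1, lp.evalCLM, lp.infty_coeFn_one]

theorem johnsonMean_smul {hW : ∀ (g : G) (w : LinftyModConst G), ‖g • w‖ = ‖w‖}
    {H : Subgroup G} {φ : LinftyModConst G →L[ℝ] ℝ}
    (hφ : ∀ h ∈ H, φ.comp (smulCLM hW h⁻¹) = φ + johnson ![1, h]) {h : G} (hh : h ∈ H)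
    (u : Linfty G) : johnsonMean φ (h • u) = johnsonMean φ u := by
  have key : φ (h • Submodule.Quotient.mk u) = φ (Submodule.Quotient.mk u) + (u h⁻¹ - u 1) := by
    simpa [smulCLM, johnson_mk] using
      congrArg (fun ψ => ψ (Submodule.Quotient.mk u)) (hφ h⁻¹ (H.inv_mem hh))
  simp [johnsonMean, lp.evalCLM, Linfty.smul_apply]
  rw [← LinftyModConst.smul_mk, key]
  ring

end JohnsonMean

theorem canonical_map_H1_bijective_implies_amenable_general (G : Type u) [Group G]
    (F : Set (Subgroup G)) (hbot : (⊥ : Subgroup G) ∈ F)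
    (hiso : ∀ (W : Type u) [NormedAddCommGroup W] [NormedSpace ℝ W]
      [DistribMulAction G W] [SMulCommClass G ℝ W],
      ∀ hW : ∀ (g : G) (w : W), ‖g • w‖ = ‖w‖,
      -- surjectivity of `H¹_{F,b}(G;W^#) → H¹_b(G;W^#)`
      (∀ f : (Fin 2 → G) → (W →L[ℝ] ℝ),
        Bdd f →
        (∀ (g : G) (x : Fin 2 → G),
          f (fun j => g • x j) = (f x).comp (smulCLM hW g⁻¹)) →
        delta 1 f = 0 →
        ∃ c : (Fin 2 → Cos G F) → (W →L[ℝ] ℝ),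
          Bdd c ∧
          (∀ (g : G) (x : Fin 2 → Cos G F),
            c (fun j => g • x j) = (c x).comp (smulCLM hW g⁻¹)) ∧
          delta 1 c = 0 ∧
          ∃ b : (Fin 1 → G) → (W →L[ℝ] ℝ),
            Bdd b ∧
            (∀ (g : G) (x : Fin 1 → G),
              b (fun j => g • x j) = (b x).comp (smulCLM hW g⁻¹)) ∧
            ∀ x : Fin 2 → G,
              c (fun j => trivEmb hbot (x j)) = f x + delta 0 b x) ∧
      -- injectivity of `H¹_{F,b}(G;W^#) → H¹_b(G;W^#)`
      ∀ c : (Fin 2 → Cos G F) → (W →L[ℝ] ℝ),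
        Bdd c →
        (∀ (g : G) (x : Fin 2 → Cos G F),
          c (fun j => g • x j) = (c x).comp (smulCLM hW g⁻¹)) →
        delta 1 c = 0 →
        (∃ b : (Fin 1 → G) → (W →L[ℝ] ℝ),
          Bdd b ∧
          (∀ (g : G) (x : Fin 1 → G),
            b (fun j => g • x j) = (b x).comp (smulCLM hW g⁻¹)) ∧
          ∀ x : Fin 2 → G, c (fun j => trivEmb hbot (x j)) = delta 0 b x) →
        ∃ b' : (Fin 1 → Cos G F) → (W →L[ℝ] ℝ),
          Bdd b' ∧
          (∀ (g : G) (x : Fin 1 → Cos G F),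
            b' (fun j => g • x j) = (b' x).comp (smulCLM hW g⁻¹)) ∧
          c = delta 0 b') :
    ∀ H : Subgroup G, H ∈ F → InvariantMean H H := by
  intro H hH
  obtain ⟨hsurj, -⟩ := hiso (LinftyModConst G) LinftyModConst.norm_smul
  obtain ⟨c, -, hc, hc_cocycle, b, -, hb, hcb⟩ :=
    hsurj johnson bdd_johnson (johnson_smul _) delta_johnson
  obtain ⟨φ, hφ⟩ := exists_comp_smul_eq_add_of_lift _ hbot hH hc hc_cocycle hb hcb
  refine invariantMean_subgroup_of_functional H ((johnsonMean φ).toLinearMap ∘ₗ Linf.toLp)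
    (bddAbove_image_Icc_toLp _) ?_ fun h hh u => ?_
  · rw [LinearMap.comp_apply, Linf.toLp_constLinf]
    exact johnsonMean_one φ
  · rw [LinearMap.comp_apply, LinearMap.comp_apply, Linf.toLp_compL_mul]
    exact johnsonMean_smul hφ hh _

/-- Theorem C, (iii) ⇒ (i).  Let `F` be a family of subgroups of
`G` (so the trivial subgroup `⊥` belongs to `F`).  If for every normed `ℝG`-module
`W` the restriction along the embedding `G → G/F` induces a bijection
`H¹_{F,b}(G; W^#) → H¹_b(G; W^#)` — surjective and injective up to coboundaries of
bounded equivariant cochains — then every subgroup `H ∈ F` is amenable. -/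
theorem canonical_map_H1_bijective_implies_amenable (G : Type u) [Group G]
    (F : Set (Subgroup G)) (hF : IsFamily F) (hbot : (⊥ : Subgroup G) ∈ F)
    (hiso : ∀ (W : Type u) [NormedAddCommGroup W] [NormedSpace ℝ W]
      [DistribMulAction G W] [SMulCommClass G ℝ W],
      ∀ hW : ∀ (g : G) (w : W), ‖g • w‖ = ‖w‖,
      -- surjectivity of `H¹_{F,b}(G;W^#) → H¹_b(G;W^#)`
      (∀ f : (Fin 2 → G) → (W →L[ℝ] ℝ),
        Bdd f →
        (∀ (g : G) (x : Fin 2 → G),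
          f (fun j => g • x j) = (f x).comp (smulCLM hW g⁻¹)) →
        delta 1 f = 0 →
        ∃ c : (Fin 2 → Cos G F) → (W →L[ℝ] ℝ),
          Bdd c ∧
          (∀ (g : G) (x : Fin 2 → Cos G F),
            c (fun j => g • x j) = (c x).comp (smulCLM hW g⁻¹)) ∧
          delta 1 c = 0 ∧
          ∃ b : (Fin 1 → G) → (W →L[ℝ] ℝ),
            Bdd b ∧
            (∀ (g : G) (x : Fin 1 → G),
              b (fun j => g • x j) = (b x).comp (smulCLM hW g⁻¹)) ∧
            ∀ x : Fin 2 → G,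
              c (fun j => trivEmb hbot (x j)) = f x + delta 0 b x) ∧
      -- injectivity of `H¹_{F,b}(G;W^#) → H¹_b(G;W^#)`
      ∀ c : (Fin 2 → Cos G F) → (W →L[ℝ] ℝ),
        Bdd c →
        (∀ (g : G) (x : Fin 2 → Cos G F),
          c (fun j => g • x j) = (c x).comp (smulCLM hW g⁻¹)) →
        delta 1 c = 0 →
        (∃ b : (Fin 1 → G) → (W →L[ℝ] ℝ),
          Bdd b ∧
          (∀ (g : G) (x : Fin 1 → G),
            b (fun j => g • x j) = (b x).comp (smulCLM hW g⁻¹)) ∧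
          ∀ x : Fin 2 → G, c (fun j => trivEmb hbot (x j)) = delta 0 b x) →
        ∃ b' : (Fin 1 → Cos G F) → (W →L[ℝ] ℝ),
          Bdd b' ∧
          (∀ (g : G) (x : Fin 1 → Cos G F),
            b' (fun j => g • x j) = (b' x).comp (smulCLM hW g⁻¹)) ∧
          c = delta 0 b') :
    ∀ H : Subgroup G, H ∈ F → InvariantMean H H :=
  canonical_map_H1_bijective_implies_amenable_general G F hbot hiso

end RelBdd
end

section
/- Let G be a group and F a family of subgroups of G. If G is amenable relative to F (i.e. the G-set G/F admits a G-invariant mean), then for every normed ℝG-module W the dual normed ℝG-module W^# is relatively F-injective. -/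
/-!
For `H ∈ F` let `σ_H` be an `H`-equivariant left inverse of `i` with `‖σ_H‖ ≤ K`. On a coset
`gH` the translate `b ↦ g • σ_H (g⁻¹ • b)` does not depend on the representative `g`, so these
translates form a `G`-equivariant family of left inverses of `i` indexed by `G/F`, uniformly
bounded by `K`. Composing with `ψ` and averaging the resulting bounded family of maps
`B → W^#` weak-* against the invariant mean on `G/F` gives the equivariant extension `Ψ`.
-/

open scoped BigOperators

universe u v w

namespace RelBdd

variable {G : Type u} [Group G]

section SmulCLM

variable {W : Type*} [NormedAddCommGroup W] [NormedSpace ℝ W] [DistribMulAction G W]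
  [SMulCommClass G ℝ W] (hW : ∀ (g : G) (w : W), ‖g • w‖ = ‖w‖) (g : G)

theorem smulCLM_apply (w : W) : smulCLM hW g w = g • w :=
  rfl

theorem norm_smulCLM_le : ‖smulCLM hW g‖ ≤ 1 :=
  LinearMap.mkContinuous_norm_le _ zero_le_one _

end SmulCLM

section Mean

variable {S : Type*}

def IsMean (m : Linf S →ₗ[ℝ] ℝ) : Prop :=
  m (constLinf S 1) = 1 ∧ ∀ f : Linf S, (∀ s, 0 ≤ (f : S → ℝ) s) → 0 ≤ m f

namespace IsMean

variable {m : Linf S →ₗ[ℝ] ℝ}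

theorem map_constLinf (hm : IsMean m) (r : ℝ) : m (constLinf S r) = r := by
  have : constLinf S r = r • constLinf S 1 := by ext; simp [constLinf]
  rw [this, map_smul, hm.1, smul_eq_mul, mul_one]

theorem abs_apply_le (hm : IsMean m) {f : Linf S} {C : ℝ} (hC : ∀ s, |(f : S → ℝ) s| ≤ C) :
    |m f| ≤ C := by
  have hlow := hm.2 (f + constLinf S C) fun s => by
    simp only [Submodule.coe_add, Pi.add_apply, constLinf]; linarith [abs_le.1 (hC s)]
  have hupp := hm.2 (constLinf S C - f) fun s => by
    simp only [Submodule.coe_sub, Pi.sub_apply, constLinf]; linarith [abs_le.1 (hC s)]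
  rw [map_add, hm.map_constLinf] at hlow
  rw [map_sub, hm.map_constLinf] at hupp
  exact abs_le.2 ⟨by linarith, by linarith⟩

end IsMean

end Mean

section Average

variable {S E W : Type*} [NormedAddCommGroup E] [NormedSpace ℝ E] [NormedAddCommGroup W]
  [NormedSpace ℝ W] {T : S → E →L[ℝ] W →L[ℝ] ℝ} {C : ℝ}

theorem abs_apply_apply_le (hT : ∀ x, ‖T x‖ ≤ C) (x : S) (e : E) (w : W) :
    |T x e w| ≤ C * ‖e‖ * ‖w‖ := by
  rw [← Real.norm_eq_abs]
  calc ‖T x e w‖ ≤ ‖T x‖ * ‖e‖ * ‖w‖ := (T x).le_opNorm₂ e w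
    _ ≤ C * ‖e‖ * ‖w‖ := by gcongr; exact hT x

variable (T) in
noncomputable def evalLinf₂ (hT : ∀ x, ‖T x‖ ≤ C) : E →ₗ[ℝ] W →ₗ[ℝ] Linf S :=
  LinearMap.mk₂ ℝ (fun e w => ⟨fun x => T x e w, _, fun x => abs_apply_apply_le hT x e w⟩)
    (fun _ _ _ => by ext; simp) (fun _ _ _ => by ext; simp)
    (fun _ _ _ => by ext; simp) (fun _ _ _ => by ext; simp)

@[simp]
theorem coe_evalLinf₂_apply_apply (hT : ∀ x, ‖T x‖ ≤ C) (e : E) (w : W) :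
    (evalLinf₂ T hT e w : S → ℝ) = fun x => T x e w :=
  rfl

noncomputable def average {m : Linf S →ₗ[ℝ] ℝ} (hm : IsMean m) (T : S → E →L[ℝ] W →L[ℝ] ℝ)
    (hT : ∀ x, ‖T x‖ ≤ C) : E →L[ℝ] W →L[ℝ] ℝ :=
  ((evalLinf₂ T hT).compr₂ m).mkContinuous₂ C fun e w => by
    rw [Real.norm_eq_abs]
    exact hm.abs_apply_le fun x => abs_apply_apply_le hT x e w

variable {m : Linf S →ₗ[ℝ] ℝ} (hm : IsMean m) (hT : ∀ x, ‖T x‖ ≤ C)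

theorem average_apply_apply (e : E) (w : W) : average hm T hT e w = m (evalLinf₂ T hT e w) :=
  rfl

theorem average_apply_of_forall_eq {e : E} {φ : W →L[ℝ] ℝ} (h : ∀ x, T x e = φ) :
    average hm T hT e = φ := by
  ext w
  have : evalLinf₂ T hT e w = constLinf S (φ w) := by ext x; simp [h, constLinf]
  rw [average_apply_apply, this, hm.map_constLinf]

theorem average_smul_eq_comp [MulAction G S] [SMul G E] [DistribMulAction G W] [SMulCommClass G ℝ W]
    (hW : ∀ (g : G) (w : W), ‖g • w‖ = ‖w‖)
    (hm_inv : ∀ (g : G) (f : Linf S), m (compL (fun s => g⁻¹ • s) f) = m f)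
    (hT_smul : ∀ (g : G) x e, T (g • x) (g • e) = (T x e).comp (smulCLM hW g⁻¹))
    (g : G) (e : E) :
    average hm T hT (g • e) = (average hm T hT e).comp (smulCLM hW g⁻¹) := by
  ext w
  have : evalLinf₂ T hT e (g⁻¹ • w) =
      compL (fun s => g⁻¹⁻¹ • s) (evalLinf₂ T hT (g • e) w) := by
    ext x
    simp [compL, hT_smul, smulCLM_apply]
  rw [ContinuousLinearMap.comp_apply, smulCLM_apply, average_apply_apply, average_apply_apply,
    this, hm_inv]

end Average

section Translate

variable {A B : Type*} [NormedAddCommGroup A] [NormedSpace ℝ A] [DistribMulAction G A]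
  [SMulCommClass G ℝ A] (hA : ∀ (g : G) (a : A), ‖g • a‖ = ‖a‖)
  [NormedAddCommGroup B] [NormedSpace ℝ B] [DistribMulAction G B]
  [SMulCommClass G ℝ B] (hB : ∀ (g : G) (b : B), ‖g • b‖ = ‖b‖)

noncomputable def translateCLM (σ : B →L[ℝ] A) (g : G) : B →L[ℝ] A :=
  (smulCLM hA g).comp (σ.comp (smulCLM hB g⁻¹))

variable {σ : B →L[ℝ] A}

theorem translateCLM_apply (g : G) (b : B) : translateCLM hA hB σ g b = g • σ (g⁻¹ • b) :=
  rfl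

theorem norm_translateCLM_le (g : G) : ‖translateCLM hA hB σ g‖ ≤ ‖σ‖ :=
  ContinuousLinearMap.opNorm_le_bound _ (norm_nonneg σ) fun b => by
    rw [translateCLM_apply, hA, ← hB g⁻¹ b]
    exact σ.le_opNorm _

theorem translateCLM_mul_apply_smul (g g' : G) (b : B) :
    translateCLM hA hB σ (g * g') (g • b) = g • translateCLM hA hB σ g' b := by
  simp only [translateCLM_apply, mul_inv_rev, mul_smul, inv_smul_smul]

theorem translateCLM_mul_of_mem {H : Subgroup G} (hσ : ∀ h ∈ H, ∀ b, σ (h • b) = h • σ b)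
    (g : G) {h : G} (hh : h ∈ H) : translateCLM hA hB σ (g * h) = translateCLM hA hB σ g := by
  ext b
  simp only [translateCLM_apply, mul_inv_rev, mul_smul, hσ h⁻¹ (H.inv_mem hh), smul_inv_smul]

theorem translateCLM_apply_of_leftInverse {i : A →L[ℝ] B}
    (hi : ∀ (g : G) (a : A), i (g • a) = g • i a) (hσi : ∀ a, σ (i a) = a) (g : G) (a : A) :
    translateCLM hA hB σ g (i a) = a := by
  rw [translateCLM_apply, ← hi, hσi, smul_inv_smul]

end Translate

theorem exists_equivariant_leftInverse_family {F : Set (Subgroup G)}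
    {A B : Type*} [NormedAddCommGroup A] [NormedSpace ℝ A] [DistribMulAction G A]
    [SMulCommClass G ℝ A] (hA : ∀ (g : G) (a : A), ‖g • a‖ = ‖a‖)
    [NormedAddCommGroup B] [NormedSpace ℝ B] [DistribMulAction G B]
    [SMulCommClass G ℝ B] (hB : ∀ (g : G) (b : B), ‖g • b‖ = ‖b‖)
    {i : A →L[ℝ] B} (hi : ∀ (g : G) (a : A), i (g • a) = g • i a) {K : ℝ}
    (hσ : ∀ H ∈ F, ∃ σ : B →L[ℝ] A,
      ‖σ‖ ≤ K ∧ (∀ h : G, h ∈ H → ∀ b, σ (h • b) = h • σ b) ∧ ∀ a, σ (i a) = a) :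
    ∃ u : Cos G F → B →L[ℝ] A, (∀ x, ‖u x‖ ≤ K) ∧
      (∀ (g : G) x b, u (g • x) (g • b) = g • u x b) ∧ ∀ x a, u x (i a) = a := by
  choose σ hσK hσH hσi using hσ
  refine ⟨fun x => translateCLM hA hB (σ x.1 x.1.2) x.2.out,
    fun x => (norm_translateCLM_le hA hB _).trans (hσK _ _), fun g x b => ?_,
    fun x a => translateCLM_apply_of_leftInverse hA hB hi (hσi _ _) _ a⟩
  obtain ⟨⟨h, hh⟩, hout⟩ := QuotientGroup.mk_out_eq_mul x.1.1 (g * x.2.out)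
  have hout' : (g • x).2.out = g * x.2.out * h := by
    rw [← hout]
    congr 1
    exact congrArg (g • ·) (QuotientGroup.out_eq' x.2).symm
  change translateCLM hA hB (σ x.1 x.1.2) (g • x).2.out (g • b) = _
  rw [hout', translateCLM_mul_of_mem hA hB (hσH _ _) _ hh, translateCLM_mul_apply_smul]

theorem relatively_amenable_implies_dual_relatively_injective_general (G : Type u) [Group G]
    (F : Set (Subgroup G))
    (hamen : InvariantMean G (Cos G F))
    (W : Type v) [NormedAddCommGroup W] [NormedSpace ℝ W] [DistribMulAction G W]
    [SMulCommClass G ℝ W] (hW : ∀ (g : G) (w : W), ‖g • w‖ = ‖w‖)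
    (A : Type w) [NormedAddCommGroup A] [NormedSpace ℝ A] [DistribMulAction G A]
    [SMulCommClass G ℝ A] (hA : ∀ (g : G) (a : A), ‖g • a‖ = ‖a‖)
    (B : Type w) [NormedAddCommGroup B] [NormedSpace ℝ B] [DistribMulAction G B]
    [SMulCommClass G ℝ B] (hB : ∀ (g : G) (b : B), ‖g • b‖ = ‖b‖)
    (i : A →L[ℝ] B) (hi : ∀ (g : G) (a : A), i (g • a) = g • i a)
    (hstrong : ∃ K : ℝ, 0 ≤ K ∧ ∀ H ∈ F, ∃ σ : B →L[ℝ] A,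
      ‖σ‖ ≤ K ∧ (∀ h : G, h ∈ H → ∀ b, σ (h • b) = h • σ b) ∧ ∀ a, σ (i a) = a)
    (ψ : A →L[ℝ] (W →L[ℝ] ℝ))
    (hψequiv : ∀ (g : G) (a : A), ψ (g • a) = (ψ a).comp (smulCLM hW g⁻¹)) :
    ∃ Ψ : B →L[ℝ] (W →L[ℝ] ℝ),
      (∀ (g : G) (b : B), Ψ (g • b) = (Ψ b).comp (smulCLM hW g⁻¹)) ∧
      ∀ a, Ψ (i a) = ψ a := by
  obtain ⟨K, -, hσ⟩ := hstrong
  obtain ⟨u, hu_norm, hu_smul, hu_i⟩ := exists_equivariant_leftInverse_family hA hB hi hσ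
  obtain ⟨m, hm_one, hm_nonneg, hm_inv⟩ := hamen
  have hm : IsMean m := ⟨hm_one, hm_nonneg⟩
  have hT : ∀ x, ‖ψ.comp (u x)‖ ≤ ‖ψ‖ * K := fun x =>
    (ψ.opNorm_comp_le _).trans (by gcongr; exact hu_norm x)
  refine ⟨average hm (fun x => ψ.comp (u x)) hT, average_smul_eq_comp hm hT hW hm_inv ?_,
    fun a => average_apply_of_forall_eq hm hT fun x => by rw [ψ.comp_apply, hu_i]⟩
  intro g x b
  rw [ψ.comp_apply, ψ.comp_apply, hu_smul, hψequiv]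

/-- Proposition 4.9, (i) ⇒ (ii).  If `G` is amenable relative to
the family `F` (the `G`-set `G/F` admits a `G`-invariant mean), then for every
normed `ℝG`-module `W` the dual `W^# = W →L[ℝ] ℝ` (with action
`(g • φ) w = φ (g⁻¹ • w)`) is relatively `F`-injective. -/
theorem relatively_amenable_implies_dual_relatively_injective (G : Type u) [Group G]
    (F : Set (Subgroup G)) (hF : IsFamily F)
    (hamen : InvariantMean G (Cos G F))
    (W : Type v) [NormedAddCommGroup W] [NormedSpace ℝ W] [DistribMulAction G W]
    [SMulCommClass G ℝ W] (hW : ∀ (g : G) (w : W), ‖g • w‖ = ‖w‖)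
    (A : Type w) [NormedAddCommGroup A] [NormedSpace ℝ A] [DistribMulAction G A]
    [SMulCommClass G ℝ A] (hA : ∀ (g : G) (a : A), ‖g • a‖ = ‖a‖)
    (B : Type w) [NormedAddCommGroup B] [NormedSpace ℝ B] [DistribMulAction G B]
    [SMulCommClass G ℝ B] (hB : ∀ (g : G) (b : B), ‖g • b‖ = ‖b‖)
    (i : A →L[ℝ] B) (hi : ∀ (g : G) (a : A), i (g • a) = g • i a)
    (hstrong : ∃ K : ℝ, 0 ≤ K ∧ ∀ H ∈ F, ∃ σ : B →L[ℝ] A,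
      ‖σ‖ ≤ K ∧ (∀ h : G, h ∈ H → ∀ b, σ (h • b) = h • σ b) ∧ ∀ a, σ (i a) = a)
    (ψ : A →L[ℝ] (W →L[ℝ] ℝ))
    (hψequiv : ∀ (g : G) (a : A), ψ (g • a) = (ψ a).comp (smulCLM hW g⁻¹)) :
    ∃ Ψ : B →L[ℝ] (W →L[ℝ] ℝ),
      (∀ (g : G) (b : B), Ψ (g • b) = (Ψ b).comp (smulCLM hW g⁻¹)) ∧
      ∀ a, Ψ (i a) = ψ a :=
  relatively_amenable_implies_dual_relatively_injective_general G F hamen W hW A hA B hB i hi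
    hstrong ψ hψequiv

end RelBdd
end
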